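/- Let B be a nonempty finite set, P_B a probability distribution on B, and (G_b, P_{X_b})_{b∈B} a family of pairwise isomorphic probabilistic graphs (there exist graph isomorphisms between them that also carry the vertex distributions onto each other). Then the chromatic entropy of the disjoint union with mixture distribution Σ_b P_B(b) P_{X_b} equals the chromatic entropy of any single component: H_χ(⊔_{b∈B} G_b, Σ_b P_B(b) P_{X_b}) = H_χ(G_b, P_{X_b}) for every b ∈ B. -/

import Mathlib

open Finset

def sigmaGraph {A : Type*} {V : A → Type*} (G : ∀ a, SimpleGraph (V a)) :
    SimpleGraph (Σ a, V a) where
  Adj u v := ∃ h : u.1 = v.1, (G v.1).Adj (h ▸ u.2) v.2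
  symm := by
    constructor
    rintro ⟨a, x⟩ ⟨b, y⟩ ⟨h, hadj⟩
    dsimp only at h
    subst h
    exact ⟨rfl, hadj.symm⟩
  loopless := by
    constructor
    rintro ⟨a, x⟩ ⟨h, hadj⟩
    exact (G a).irrefl hadj

noncomputable def H2 {A : Type*} [Fintype A] (p : A → ℝ) : ℝ :=
  -∑ a, p a * Real.logb 2 (p a)

noncomputable def colorEntropy {V : Type*} [Fintype V] (p : V → ℝ) (c : V → ℕ) : ℝ :=
  -∑ k ∈ Finset.univ.image c,
      (∑ v ∈ Finset.univ.filter (fun v => c v = k), p v) *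
        Real.logb 2 (∑ v ∈ Finset.univ.filter (fun v => c v = k), p v)

noncomputable def Hchi {V : Type*} [Fintype V] (G : SimpleGraph V) (p : V → ℝ) : ℝ :=
  sInf {x | ∃ c : V → ℕ, (∀ u v, G.Adj u v → c u ≠ c v) ∧ x = colorEntropy p c}

/-! Every component is isomorphic to `G b` with its distribution, and the chromatic entropy is an
isomorphism invariant, so it suffices to treat `|B|` weighted copies of one graph `G`. Colouring
every copy by the same colouring of `G` leaves the colour-class masses unchanged, which gives `≤`.
Conversely, a colouring of the union restricts to a colouring of each copy, and since the colour
classes of the union have the mixture masses, concavity of `x ↦ -x log x` gives `≥`. -/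

noncomputable def classMass {V : Type*} [Fintype V] (p : V → ℝ) (c : V → ℕ) (k : ℕ) : ℝ :=
  ∑ v ∈ univ.filter (fun v => c v = k), p v

section ColorEntropy

variable {V W : Type*} [Fintype V] [Fintype W]

lemma classMass_nonneg {p : V → ℝ} (hp : ∀ v, 0 ≤ p v) (c : V → ℕ) (k : ℕ) :
    0 ≤ classMass p c k :=
  sum_nonneg fun v _ => hp v

lemma classMass_le_one {p : V → ℝ} (hp : p ∈ stdSimplex ℝ V) (c : V → ℕ) (k : ℕ) :
    classMass p c k ≤ 1 :=
  hp.2 ▸ sum_le_sum_of_subset_of_nonneg (subset_univ _) fun v _ _ => hp.1 v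

lemma classMass_comp_equiv (e : W ≃ V) (p : V → ℝ) (c : V → ℕ) (k : ℕ) :
    classMass (p ∘ e) (c ∘ e) k = classMass p c k := by
  simp only [classMass, sum_filter]
  exact e.sum_comp fun v => if c v = k then p v else 0

lemma classMass_eq_zero_of_notMem_image (p : V → ℝ) {c : V → ℕ} {k : ℕ}
    (hk : k ∉ univ.image c) : classMass p c k = 0 :=
  sum_eq_zero fun v hv => absurd (mem_image.2 ⟨v, mem_univ v, (mem_filter.1 hv).2⟩) hk

lemma colorEntropy_eq_sum_negMulLog (p : V → ℝ) (c : V → ℕ) {K : Finset ℕ}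
    (hK : univ.image c ⊆ K) :
    colorEntropy p c = (∑ k ∈ K, Real.negMulLog (classMass p c k)) / Real.log 2 := by
  rw [← sum_subset hK fun k _ hk => by
    rw [classMass_eq_zero_of_notMem_image p hk, Real.negMulLog_zero]]
  rw [colorEntropy, sum_div, ← sum_neg_distrib]
  refine sum_congr rfl fun k _ => ?_
  simp only [classMass, Real.negMulLog, Real.logb]
  ring

lemma colorEntropy_nonneg {p : V → ℝ} (hp : p ∈ stdSimplex ℝ V) (c : V → ℕ) :
    0 ≤ colorEntropy p c := by
  rw [colorEntropy_eq_sum_negMulLog p c subset_rfl]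
  exact div_nonneg (sum_nonneg fun k _ =>
    Real.negMulLog_nonneg (classMass_nonneg hp.1 c k) (classMass_le_one hp c k))
    (Real.log_nonneg one_le_two)

lemma colorEntropy_comp_equiv (e : W ≃ V) (p : V → ℝ) (c : V → ℕ) :
    colorEntropy (p ∘ e) (c ∘ e) = colorEntropy p c := by
  have himage : univ.image (c ∘ e) ⊆ univ.image c :=
    image_subset_iff.2 fun w _ => mem_image_of_mem c (mem_univ (e w))
  rw [colorEntropy_eq_sum_negMulLog _ _ himage, colorEntropy_eq_sum_negMulLog p c subset_rfl]
  simp only [classMass_comp_equiv]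

end ColorEntropy

section Hchi

variable {V W : Type*} [Fintype V] [Fintype W]

lemma Hchi_le (G : SimpleGraph V) {p : V → ℝ} (hp : p ∈ stdSimplex ℝ V) {c : V → ℕ}
    (hc : ∀ u v, G.Adj u v → c u ≠ c v) : Hchi G p ≤ colorEntropy p c :=
  csInf_le ⟨0, by rintro x ⟨c, -, rfl⟩; exact colorEntropy_nonneg hp c⟩ ⟨c, hc, rfl⟩

lemma le_Hchi (G : SimpleGraph V) (p : V → ℝ) {y : ℝ}
    (h : ∀ c : V → ℕ, (∀ u v, G.Adj u v → c u ≠ c v) → y ≤ colorEntropy p c) :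
    y ≤ Hchi G p := by
  have hinj : Function.Injective fun v => (Fintype.equivFin V v : ℕ) :=
    Fin.val_injective.comp (Fintype.equivFin V).injective
  refine le_csInf ⟨_, _, fun u v huv => hinj.ne (G.ne_of_adj huv), rfl⟩ ?_
  rintro x ⟨c, hc, rfl⟩
  exact h c hc

lemma Hchi_congr {G : SimpleGraph V} {G' : SimpleGraph W} {p : V → ℝ} {p' : W → ℝ}
    (ψ : G ≃g G') (hp : ∀ x, p x = p' (ψ x)) : Hchi G p = Hchi G' p' := by
  have hp' : p = p' ∘ ψ.toEquiv := funext hp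
  unfold Hchi
  congr 1
  ext x
  constructor
  · rintro ⟨c, hc, rfl⟩
    refine ⟨c ∘ ψ.symm, fun u v huv => hc _ _ (ψ.symm.map_adj_iff.2 huv), ?_⟩
    rw [hp', ← colorEntropy_comp_equiv ψ.toEquiv p' (c ∘ ψ.symm)]
    congr
    funext v
    simp
  · rintro ⟨c, hc, rfl⟩
    refine ⟨c ∘ ψ, fun u v huv => hc _ _ (ψ.map_adj_iff.2 huv), ?_⟩
    rw [hp']
    exact (colorEntropy_comp_equiv ψ.toEquiv p' c).symm

end Hchi

section SigmaGraph

variable {B : Type*} {V W : B → Type*}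

def sigmaGraphIso {G : ∀ b, SimpleGraph (V b)} {H : ∀ b, SimpleGraph (W b)}
    (ψ : ∀ b, G b ≃g H b) : sigmaGraph G ≃g sigmaGraph H where
  toEquiv := Equiv.sigmaCongrRight fun b => (ψ b).toEquiv
  map_rel_iff' := by
    rintro ⟨a, x⟩ ⟨b, y⟩
    constructor
    · rintro ⟨h, hadj⟩
      obtain rfl : a = b := h
      exact ⟨rfl, (ψ a).map_adj_iff.1 hadj⟩
    · rintro ⟨h, hadj⟩
      obtain rfl : a = b := h
      exact ⟨rfl, (ψ a).map_adj_iff.2 hadj⟩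

variable [Fintype B] [∀ b, Fintype (V b)]

lemma mem_stdSimplex_sigma {PB : B → ℝ} {p : ∀ b, V b → ℝ} (hPB : PB ∈ stdSimplex ℝ B)
    (hp : ∀ b, p b ∈ stdSimplex ℝ (V b)) :
    (fun x : Σ b, V b => PB x.1 * p x.1 x.2) ∈ stdSimplex ℝ (Σ b, V b) := by
  refine ⟨fun x => mul_nonneg (hPB.1 x.1) ((hp x.1).1 x.2), ?_⟩
  rw [← univ_sigma_univ, sum_sigma]
  simp only [← mul_sum, (hp _).2, mul_one]
  exact hPB.2

lemma classMass_sigma (PB : B → ℝ) (p : ∀ b, V b → ℝ) (c : (Σ b, V b) → ℕ) (k : ℕ) :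
    classMass (fun x => PB x.1 * p x.1 x.2) c k
      = ∑ b, PB b * classMass (p b) (fun v => c ⟨b, v⟩) k := by
  simp only [classMass, sum_filter, mul_sum, ← univ_sigma_univ, sum_sigma, mul_ite, mul_zero]

end SigmaGraph

section Copies

variable {B V : Type*} [Fintype B] [Fintype V] (G : SimpleGraph V) {PB : B → ℝ} {p : V → ℝ}

lemma Hchi_sigmaGraph_const_le (hPB : PB ∈ stdSimplex ℝ B) (hp : p ∈ stdSimplex ℝ V) :
    Hchi (sigmaGraph fun _ : B => G) (fun x => PB x.1 * p x.2) ≤ Hchi G p := by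
  refine le_Hchi G p fun c hc => ?_
  have hproper : ∀ u v, (sigmaGraph fun _ : B => G).Adj u v → c u.2 ≠ c v.2 := by
    rintro ⟨a, x⟩ ⟨b, y⟩ ⟨h, hadj⟩
    obtain rfl : a = b := h
    exact hc x y hadj
  refine (Hchi_le _ (mem_stdSimplex_sigma hPB fun _ => hp) hproper).trans_eq ?_
  have himage : univ.image (fun x : Σ _ : B, V => c x.2) ⊆ univ.image c :=
    image_subset_iff.2 fun x _ => mem_image_of_mem c (mem_univ x.2)
  rw [colorEntropy_eq_sum_negMulLog _ _ himage, colorEntropy_eq_sum_negMulLog p c subset_rfl]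
  simp only [classMass_sigma PB fun _ => p, ← sum_mul, hPB.2, one_mul]

lemma le_Hchi_sigmaGraph_const (hPB : PB ∈ stdSimplex ℝ B) (hp : p ∈ stdSimplex ℝ V) :
    Hchi G p ≤ Hchi (sigmaGraph fun _ : B => G) (fun x => PB x.1 * p x.2) := by
  refine le_Hchi _ _ fun c hc => ?_
  set K := univ.image c
  set m : B → ℕ → ℝ := fun b k => classMass p (fun v => c ⟨b, v⟩) k
  have hslice : ∀ b, Hchi G p ≤ (∑ k ∈ K, Real.negMulLog (m b k)) / Real.log 2 := fun b => by
    have hsub : univ.image (fun v => c ⟨b, v⟩) ⊆ K :=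
      image_subset_iff.2 fun v _ => mem_image_of_mem c (mem_univ _)
    rw [← colorEntropy_eq_sum_negMulLog _ _ hsub]
    exact Hchi_le G hp fun u v huv => hc _ _ ⟨rfl, huv⟩
  have hconcave : ∀ k, ∑ b, PB b * Real.negMulLog (m b k)
      ≤ Real.negMulLog (∑ b, PB b * m b k) := fun k => by
    simpa only [smul_eq_mul] using Real.concaveOn_negMulLog.le_map_sum
      (fun b _ => hPB.1 b) hPB.2 fun b _ => classMass_nonneg hp.1 _ k
  calc Hchi G p = ∑ b, PB b * Hchi G p := by rw [← sum_mul, hPB.2, one_mul]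
    _ ≤ ∑ b, PB b * ((∑ k ∈ K, Real.negMulLog (m b k)) / Real.log 2) :=
      sum_le_sum fun b _ => mul_le_mul_of_nonneg_left (hslice b) (hPB.1 b)
    _ = (∑ k ∈ K, ∑ b, PB b * Real.negMulLog (m b k)) / Real.log 2 := by
      simp only [mul_div_assoc', ← sum_div, mul_sum]
      rw [sum_comm]
    _ ≤ (∑ k ∈ K, Real.negMulLog (∑ b, PB b * m b k)) / Real.log 2 := by
      gcongr with k
      exact hconcave k
    _ = colorEntropy (fun x : Σ _ : B, V => PB x.1 * p x.2) c := by
      rw [colorEntropy_eq_sum_negMulLog _ c (subset_refl K)]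
      simp only [classMass_sigma PB fun _ => p, m]

lemma Hchi_sigmaGraph_const (hPB : PB ∈ stdSimplex ℝ B) (hp : p ∈ stdSimplex ℝ V) :
    Hchi (sigmaGraph fun _ : B => G) (fun x => PB x.1 * p x.2) = Hchi G p :=
  (Hchi_sigmaGraph_const_le G hPB hp).antisymm (le_Hchi_sigmaGraph_const G hPB hp)

end Copies

theorem stmt9_general {B : Type*} [Fintype B] {V : B → Type*} [∀ b, Fintype (V b)]
    (G : ∀ b, SimpleGraph (V b)) (PB : B → ℝ) (p : ∀ b, V b → ℝ)
    (hPB : PB ∈ stdSimplex ℝ B) (hp : ∀ b, p b ∈ stdSimplex ℝ (V b))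
    (hiso : ∀ b b', ∃ ψ : G b ≃g G b', ∀ x, p b x = p b' (ψ x)) :
    ∀ b, Hchi (sigmaGraph G) (fun x => PB x.1 * p x.1 x.2) = Hchi (G b) (p b) := by
  intro b
  choose ψ hψ using fun a => hiso a b
  rw [← Hchi_sigmaGraph_const (G b) hPB (hp b)]
  exact Hchi_congr (sigmaGraphIso ψ) fun ⟨a, v⟩ => by rw [hψ a v]; rfl

theorem stmt9 {B : Type*} [Fintype B] [Nonempty B] {V : B → Type*} [∀ b, Fintype (V b)]
    (G : ∀ b, SimpleGraph (V b)) (PB : B → ℝ) (p : ∀ b, V b → ℝ)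
    (hPB : PB ∈ stdSimplex ℝ B) (hp : ∀ b, p b ∈ stdSimplex ℝ (V b))
    (hiso : ∀ b b', ∃ ψ : G b ≃g G b', ∀ x, p b x = p b' (ψ x)) :
    ∀ b, Hchi (sigmaGraph G) (fun x => PB x.1 * p x.1 x.2) = Hchi (G b) (p b) :=
  stmt9_general G PB p hPB hp hiso
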